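/- Validity of the (ℓ,S)-type inequalities of the echelon stock formulation: in any feasible plan (x, s, y) of the 3LSPD-C standard formulation, for every facility i ∈ {p} ∪ W ∪ R and all periods 1 ≤ t ≤ ℓ ≤ n, the echelon stock satisfies I^i_{t−1} ≥ ∑_{j=t}^{ℓ} d^i_j · (1 − ∑_{u=t}^{j} y^i_u), where d^i_j is the echelon demand of facility i in period j (d^r_j for a retailer r, d^w_j = ∑_{r : a(r)=w} d^r_j for a warehouse w, and d^p_j = ∑_{r∈R} d^r_j). -/
import Mathlib


open Finset

variable {W R : Type*} [Fintype W] [Fintype R] [DecidableEq W]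

/-- Echelon demand of a warehouse `w` in period `t`. -/
def dW (a : R → W) (d : R → ℕ → ℝ) (w : W) (t : ℕ) : ℝ :=
  ∑ r ∈ univ.filter (fun r => a r = w), d r t

/-- Echelon demand of the plant in period `t`. -/
def dP (d : R → ℕ → ℝ) (t : ℕ) : ℝ :=
  ∑ r, d r t

/-- Echelon stock at the plant associated with physical inventories `sp`, `sw`, `sr`. -/
def echelonP (sp : ℕ → ℝ) (sw : W → ℕ → ℝ) (sr : R → ℕ → ℝ) (t : ℕ) : ℝ :=
  sp t + (∑ w, sw w t) + ∑ r, sr r t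

/-- Echelon stock at a warehouse `w`. -/
def echelonW (a : R → W) (sw : W → ℕ → ℝ) (sr : R → ℕ → ℝ) (w : W) (t : ℕ) : ℝ :=
  sw w t + ∑ r ∈ univ.filter (fun r => a r = w), sr r t

/-- Echelon stock at a retailer `r`. -/
def echelonR (sr : R → ℕ → ℝ) (r : R) (t : ℕ) : ℝ :=
  sr r t

/-- A feasible plan of the 3LSPD-C standard formulation: nonnegative quantities and
inventories, zero initial inventories, binary setup indicators enforcing the
quantities, production capacities at the plant, and flow balance at every facility. -/
def Feasible (n : ℕ) (a : R → W) (d : R → ℕ → ℝ) (C : ℕ → ℝ)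
    (xp : ℕ → ℝ) (xw : W → ℕ → ℝ) (xr : R → ℕ → ℝ)
    (sp : ℕ → ℝ) (sw : W → ℕ → ℝ) (sr : R → ℕ → ℝ)
    (yp : ℕ → ℝ) (yw : W → ℕ → ℝ) (yr : R → ℕ → ℝ) : Prop :=
  sp 0 = 0 ∧ (∀ w, sw w 0 = 0) ∧ (∀ r, sr r 0 = 0) ∧
  (∀ t ∈ Finset.Icc 1 n,
    0 ≤ xp t ∧ 0 ≤ sp t ∧ (yp t = 0 ∨ yp t = 1) ∧ (yp t = 0 → xp t = 0) ∧ xp t ≤ C t ∧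
    sp (t - 1) + xp t = (∑ w, xw w t) + sp t) ∧
  (∀ w, ∀ t ∈ Finset.Icc 1 n,
    0 ≤ xw w t ∧ 0 ≤ sw w t ∧ (yw w t = 0 ∨ yw w t = 1) ∧ (yw w t = 0 → xw w t = 0) ∧
    sw w (t - 1) + xw w t = (∑ r ∈ univ.filter (fun r => a r = w), xr r t) + sw w t) ∧
  (∀ r, ∀ t ∈ Finset.Icc 1 n,
    0 ≤ xr r t ∧ 0 ≤ sr r t ∧ (yr r t = 0 ∨ yr r t = 1) ∧ (yr r t = 0 → xr r t = 0) ∧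
    sr r (t - 1) + xr r t = d r t + sr r t)

/-- Telescoping: if there is no setup on `[t, m]`, the inflow is zero there, so the
echelon stock at `t-1` equals the stock at `m` plus the cumulated demand. -/
lemma teles_aux (n : ℕ) (I X D y : ℕ → ℝ)
    (h : ∀ j ∈ Icc 1 n, (y j = 0 → X j = 0) ∧ I (j - 1) + X j = D j + I j)
    (t : ℕ) (ht : 1 ≤ t) :
    ∀ m, t - 1 ≤ m → m ≤ n → (∀ u ∈ Icc t m, y u = 0) →
      I (t - 1) = I m + ∑ j ∈ Icc t m, D j := by
  intro m
  induction m with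
  | zero =>
    intro h1 _ _
    have ht1 : t = 1 := by omega
    subst ht1
    simp
  | succ m ih =>
    intro h1 h2 h3
    by_cases hc : t ≤ m + 1
    · have hIm := ih (by omega) (by omega) (fun u hu => h3 u (by
        simp only [mem_Icc] at hu ⊢; omega))
      obtain ⟨hx0, hbal⟩ := h (m + 1) (by simp only [mem_Icc]; omega)
      have hy : y (m + 1) = 0 := h3 (m + 1) (by simp only [mem_Icc]; omega)
      have hX : X (m + 1) = 0 := hx0 hy
      rw [Finset.sum_Icc_succ_top hc]
      have hbal' : I m + X (m + 1) = D (m + 1) + I (m + 1) := by simpa using hbal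
      linarith
    · have hemp : Icc t (m + 1) = ∅ := Icc_eq_empty (by omega)
      have ht' : t - 1 = m + 1 := by omega
      rw [hemp, ht']
      simp

/-- Abstract single-facility form of the (ℓ,S) inequality. -/
lemma key_lS (n : ℕ) (I X D y : ℕ → ℝ)
    (hI : ∀ j, j ≤ n → 0 ≤ I j)
    (h : ∀ j ∈ Icc 1 n, 0 ≤ D j ∧ (y j = 0 ∨ y j = 1) ∧ (y j = 0 → X j = 0) ∧
      I (j - 1) + X j = D j + I j)
    {t ℓ : ℕ} (ht : 1 ≤ t) (htl : t ≤ ℓ) (hln : ℓ ≤ n) :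
    ∑ j ∈ Icc t ℓ, D j * (1 - ∑ u ∈ Icc t j, y u) ≤ I (t - 1) := by
  classical
  have tel := teles_aux n I X D y (fun j hj => ⟨(h j hj).2.2.1, (h j hj).2.2.2⟩) t ht
  by_cases hS : ∃ u ∈ Icc t ℓ, y u = 1
  · set S := (Icc t ℓ).filter (fun u => y u = 1) with hSdef
    have hSne : S.Nonempty := by
      obtain ⟨u, hu, hyu⟩ := hS
      exact ⟨u, by simp [hSdef, mem_filter, hu, hyu]⟩
    set τ := S.min' hSne with hτdef
    have hτS : τ ∈ S := Finset.min'_mem _ _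
    have hτmem : τ ∈ Icc t ℓ := (Finset.mem_filter.mp hτS).1
    have hyτ : y τ = 1 := (Finset.mem_filter.mp hτS).2
    have hτt : t ≤ τ := (mem_Icc.mp hτmem).1
    have hτℓ : τ ≤ ℓ := (mem_Icc.mp hτmem).2
    have hymin : ∀ u, t ≤ u → u < τ → y u = 0 := by
      intro u h1 h2
      rcases (h u (mem_Icc.mpr ⟨by omega, by omega⟩)).2.1 with h0 | h1'
      · exact h0
      · exfalso
        have huS : u ∈ S := mem_filter.mpr ⟨mem_Icc.mpr ⟨h1, by omega⟩, h1'⟩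
        have := Finset.min'_le S u huS
        omega
    have hpt : ∀ j ∈ Icc t ℓ, D j * (1 - ∑ u ∈ Icc t j, y u) ≤
        (if j < τ then D j else 0) := by
      intro j hj
      obtain ⟨hj1, hj2⟩ := mem_Icc.mp hj
      by_cases hjτ : j < τ
      · rw [if_pos hjτ]
        have hz : ∑ u ∈ Icc t j, y u = 0 := Finset.sum_eq_zero (fun u hu => by
          obtain ⟨hu1, hu2⟩ := mem_Icc.mp hu
          exact hymin u hu1 (by omega))
        rw [hz]; simp
      · rw [if_neg hjτ]
        have hτj : τ ≤ j := by omega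
        have hsum1 : (1 : ℝ) ≤ ∑ u ∈ Icc t j, y u := by
          have hnn : ∀ u ∈ Icc t j, 0 ≤ y u := by
            intro u hu
            obtain ⟨hu1, hu2⟩ := mem_Icc.mp hu
            rcases (h u (mem_Icc.mpr ⟨by omega, by omega⟩)).2.1 with h0 | h1'
            · rw [h0]
            · rw [h1']; norm_num
          have := Finset.single_le_sum hnn (mem_Icc.mpr ⟨hτt, hτj⟩)
          rw [hyτ] at this
          exact this
        have hD : 0 ≤ D j := (h j (mem_Icc.mpr ⟨by omega, by omega⟩)).1
        have : 1 - ∑ u ∈ Icc t j, y u ≤ 0 := by linarith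
        exact mul_nonpos_of_nonneg_of_nonpos hD this
    calc ∑ j ∈ Icc t ℓ, D j * (1 - ∑ u ∈ Icc t j, y u)
        ≤ ∑ j ∈ Icc t ℓ, (if j < τ then D j else 0) := Finset.sum_le_sum hpt
      _ = ∑ j ∈ Icc t (τ - 1), D j := by
          rw [← Finset.sum_filter]
          congr 1
          ext j
          simp only [mem_filter, mem_Icc]
          omega
      _ ≤ I (t - 1) := by
          have htel := tel (τ - 1) (by omega) (by omega) (fun u hu => by
            obtain ⟨hu1, hu2⟩ := mem_Icc.mp hu
            exact hymin u hu1 (by omega))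
          have hIτ := hI (τ - 1) (by omega)
          linarith
  · push_neg at hS
    have hy0 : ∀ u ∈ Icc t ℓ, y u = 0 := by
      intro u hu
      obtain ⟨hu1, hu2⟩ := mem_Icc.mp hu
      rcases (h u (mem_Icc.mpr ⟨by omega, by omega⟩)).2.1 with h0 | h1'
      · exact h0
      · exact absurd h1' (hS u hu)
    have htel := tel ℓ (by omega) hln hy0
    have hEq : ∑ j ∈ Icc t ℓ, D j * (1 - ∑ u ∈ Icc t j, y u) = ∑ j ∈ Icc t ℓ, D j := by
      refine Finset.sum_congr rfl (fun j hj => ?_)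
      obtain ⟨hj1, hj2⟩ := mem_Icc.mp hj
      have hz : ∑ u ∈ Icc t j, y u = 0 := Finset.sum_eq_zero (fun u hu => by
        obtain ⟨hu1, hu2⟩ := mem_Icc.mp hu
        exact hy0 u (mem_Icc.mpr ⟨hu1, by omega⟩))
      rw [hz]; ring
    rw [hEq]
    have := hI ℓ hln
    linarith

/-- Validity of the (ℓ,S)-type inequalities of the echelon stock formulation: in any
feasible plan, for every facility `i` and periods `1 ≤ t ≤ ℓ ≤ n`, the echelon stock
satisfies `I^i_{t-1} ≥ ∑_{j=t}^{ℓ} d^i_j (1 - ∑_{u=t}^{j} y^i_u)`. -/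
theorem lS_inequalities_valid
    (n : ℕ) (a : R → W) (d : R → ℕ → ℝ) (C : ℕ → ℝ)
    (hd : ∀ r, ∀ t ∈ Icc 1 n, 0 ≤ d r t) (hC : ∀ t ∈ Icc 1 n, 0 ≤ C t)
    (xp : ℕ → ℝ) (xw : W → ℕ → ℝ) (xr : R → ℕ → ℝ)
    (sp : ℕ → ℝ) (sw : W → ℕ → ℝ) (sr : R → ℕ → ℝ)
    (yp : ℕ → ℝ) (yw : W → ℕ → ℝ) (yr : R → ℕ → ℝ)
    (hfeas : Feasible n a d C xp xw xr sp sw sr yp yw yr) :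
    ∀ t ℓ : ℕ, 1 ≤ t → t ≤ ℓ → ℓ ≤ n →
      ((∑ j ∈ Icc t ℓ, dP d j * (1 - ∑ u ∈ Icc t j, yp u)) ≤ echelonP sp sw sr (t - 1)) ∧
      (∀ w, (∑ j ∈ Icc t ℓ, dW a d w j * (1 - ∑ u ∈ Icc t j, yw w u))
        ≤ echelonW a sw sr w (t - 1)) ∧
      (∀ r, (∑ j ∈ Icc t ℓ, d r j * (1 - ∑ u ∈ Icc t j, yr r u))
        ≤ echelonR sr r (t - 1)) := by
  obtain ⟨hsp0, hsw0, hsr0, hP, hW, hR⟩ := hfeas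
  -- nonnegativity of physical stocks up to period n
  have hspn : ∀ j, j ≤ n → 0 ≤ sp j := by
    intro j hj
    rcases Nat.eq_zero_or_pos j with h0 | h1
    · rw [h0, hsp0]
    · exact (hP j (mem_Icc.mpr ⟨h1, hj⟩)).2.1
  have hswn : ∀ w j, j ≤ n → 0 ≤ sw w j := by
    intro w j hj
    rcases Nat.eq_zero_or_pos j with h0 | h1
    · rw [h0, hsw0 w]
    · exact (hW w j (mem_Icc.mpr ⟨h1, hj⟩)).2.1
  have hsrn : ∀ r j, j ≤ n → 0 ≤ sr r j := by
    intro r j hj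
    rcases Nat.eq_zero_or_pos j with h0 | h1
    · rw [h0, hsr0 r]
    · exact (hR r j (mem_Icc.mpr ⟨h1, hj⟩)).2.1
  -- fiberwise sum identity
  have hfib : ∀ (f : R → ℝ),
      (∑ w, ∑ r ∈ univ.filter (fun r => a r = w), f r) = ∑ r, f r := by
    intro f
    exact Finset.sum_fiberwise univ a f
  -- echelon balance at the retailers (summed over a fiber or over all)
  have hRbal : ∀ (s : Finset R), ∀ j ∈ Icc 1 n,
      (∑ r ∈ s, sr r (j - 1)) + (∑ r ∈ s, xr r j)
        = (∑ r ∈ s, d r j) + ∑ r ∈ s, sr r j := by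
    intro s j hj
    rw [← Finset.sum_add_distrib, ← Finset.sum_add_distrib]
    exact Finset.sum_congr rfl (fun r _ => (hR r j hj).2.2.2.2)
  intro t ℓ ht htl hln
  refine ⟨?_, ?_, ?_⟩
  · -- plant
    refine key_lS n (echelonP sp sw sr) xp (dP d) yp ?_ ?_ ht htl hln
    · intro j hj
      unfold echelonP
      have := hspn j hj
      have h2 : 0 ≤ ∑ w, sw w j := Finset.sum_nonneg (fun w _ => hswn w j hj)
      have h3 : 0 ≤ ∑ r, sr r j := Finset.sum_nonneg (fun r _ => hsrn r j hj)
      linarith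
    · intro j hj
      obtain ⟨hj1, hj2⟩ := mem_Icc.mp hj
      refine ⟨Finset.sum_nonneg (fun r _ => hd r j hj), (hP j hj).2.2.1,
        (hP j hj).2.2.2.1, ?_⟩
      have hp := (hP j hj).2.2.2.2.2
      have hwbal : (∑ w, sw w (j - 1)) + (∑ w, xw w j)
          = (∑ r, xr r j) + ∑ w, sw w j := by
        have h1 : ∑ w, (sw w (j - 1) + xw w j)
            = ∑ w, ((∑ r ∈ univ.filter (fun r => a r = w), xr r j) + sw w j) :=
          Finset.sum_congr rfl (fun w _ => (hW w j hj).2.2.2.2)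
        rw [Finset.sum_add_distrib, Finset.sum_add_distrib, hfib (fun r => xr r j)] at h1
        exact h1
      have hrbal := hRbal univ j hj
      unfold echelonP dP
      linarith
  · -- warehouses
    intro w
    refine key_lS n (echelonW a sw sr w) (xw w) (dW a d w) (yw w) ?_ ?_ ht htl hln
    · intro j hj
      unfold echelonW
      have := hswn w j hj
      have h2 : 0 ≤ ∑ r ∈ univ.filter (fun r => a r = w), sr r j :=
        Finset.sum_nonneg (fun r _ => hsrn r j hj)
      linarith
    · intro j hj
      refine ⟨Finset.sum_nonneg (fun r _ => hd r j hj), (hW w j hj).2.2.1,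
        (hW w j hj).2.2.2.1, ?_⟩
      have hwb := (hW w j hj).2.2.2.2
      have hrbal := hRbal (univ.filter (fun r => a r = w)) j hj
      unfold echelonW dW
      linarith
  · -- retailers
    intro r
    refine key_lS n (echelonR sr r) (xr r) (d r) (yr r) ?_ ?_ ht htl hln
    · intro j hj
      exact hsrn r j hj
    · intro j hj
      exact ⟨hd r j hj, (hR r j hj).2.2.1, (hR r j hj).2.2.2.1, (hR r j hj).2.2.2.2⟩
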